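/- arXiv:2301.06935 — 4 statements merged into one kernel-verified Lean document; each statement's English description precedes it below -/
import Mathlib

section
/- Let α ∈ ℝ, κ ≥ 0 and let f, g solve f' = -αg, g' = -κ(1+t²)g + αf + (2t/(1+t²))g with data at time 0. Then for all 0 ≤ t ≤ κ^(-1/3), f(t)² + g(t)² ≤ (1+t²)²·(f(0)² + g(0)²). -/
/-!
Dividing the energy `f² + g²` by the weight `(1 + t²)²` absorbs the growth produced by the term
`(2t/(1+t²)) g`: the weighted energy has derivative `-(2κ(1+t²)² g² + 4t f²)/(1+t²)³`, which is
nonpositive for `t ≥ 0` and `κ ≥ 0`. Hence the weighted energy at time `t ≥ 0` is at most its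
value `f(0)² + g(0)²` at time `0`.
-/

open Set

noncomputable def weightedEnergy (f g : ℝ → ℝ) (t : ℝ) : ℝ :=
  (f t ^ 2 + g t ^ 2) / (1 + t ^ 2) ^ 2

lemma hasDerivAt_energy {α κ t : ℝ} {f g : ℝ → ℝ}
    (hf : HasDerivAt f (-α * g t) t)
    (hg : HasDerivAt g (-κ * (1 + t ^ 2) * g t + α * f t + (2 * t / (1 + t ^ 2)) * g t) t) :
    HasDerivAt (fun s ↦ f s ^ 2 + g s ^ 2)
      (-2 * κ * (1 + t ^ 2) * g t ^ 2 + 4 * t / (1 + t ^ 2) * g t ^ 2) t := by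
  refine ((hf.fun_pow 2).add (hg.fun_pow 2)).congr_deriv ?_
  ring

lemma hasDerivAt_weightedEnergy {α κ t : ℝ} {f g : ℝ → ℝ}
    (hf : HasDerivAt f (-α * g t) t)
    (hg : HasDerivAt g (-κ * (1 + t ^ 2) * g t + α * f t + (2 * t / (1 + t ^ 2)) * g t) t) :
    HasDerivAt (weightedEnergy f g)
      (-(2 * κ * (1 + t ^ 2) ^ 2 * g t ^ 2 + 4 * t * f t ^ 2) / (1 + t ^ 2) ^ 3) t := by
  have hweight : HasDerivAt (fun s : ℝ ↦ (1 + s ^ 2) ^ 2) (2 * (1 + t ^ 2) * (2 * t)) t := by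
    refine (((hasDerivAt_id t).fun_pow 2).const_add 1 |>.fun_pow 2).congr_deriv ?_
    simp only [id]
    ring
  refine ((hasDerivAt_energy hf hg).div hweight (by positivity)).congr_deriv ?_
  field_simp
  ring

lemma antitoneOn_weightedEnergy {α κ : ℝ} (hκ : 0 ≤ κ) {f g : ℝ → ℝ}
    (hf : ∀ t, HasDerivAt f (-α * g t) t)
    (hg : ∀ t, HasDerivAt g
      (-κ * (1 + t ^ 2) * g t + α * f t + (2 * t / (1 + t ^ 2)) * g t) t) :
    AntitoneOn (weightedEnergy f g) (Ici 0) := by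
  have hderiv t := hasDerivAt_weightedEnergy (hf t) (hg t)
  refine antitoneOn_of_hasDerivWithinAt_nonpos (convex_Ici 0)
    (fun t _ ↦ (hderiv t).continuousAt.continuousWithinAt)
    (fun t _ ↦ (hderiv t).hasDerivWithinAt) fun t ht ↦ ?_
  rw [interior_Ici, mem_Ioi] at ht
  apply div_nonpos_of_nonpos_of_nonneg _ (by positivity)
  rw [neg_nonpos]
  positivity

theorem stmt7 (α κ : ℝ) (hκ : 0 ≤ κ)
    (f g : ℝ → ℝ) (hf : Differentiable ℝ f) (hg : Differentiable ℝ g)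
    (hfeq : ∀ t, deriv f t = -α * g t)
    (hgeq : ∀ t, deriv g t = -κ * (1 + t ^ 2) * g t + α * f t + (2 * t / (1 + t ^ 2)) * g t) :
    ∀ t : ℝ, 0 ≤ t → t ≤ κ ^ (-(1 : ℝ) / 3) →
      f t ^ 2 + g t ^ 2 ≤ (1 + t ^ 2) ^ 2 * (f 0 ^ 2 + g 0 ^ 2) := by
  intro t ht _
  have hanti := antitoneOn_weightedEnergy hκ (fun s ↦ hfeq s ▸ (hf s).hasDerivAt)
    (fun s ↦ hgeq s ▸ (hg s).hasDerivAt)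
  have hle : weightedEnergy f g t ≤ weightedEnergy f g 0 := hanti self_mem_Ici ht ht
  simpa [weightedEnergy, div_le_iff₀ (by positivity : (0 : ℝ) < (1 + t ^ 2) ^ 2), mul_comm]
    using hle
end

section
/- Let K > 0 and β > 0, and let (u, j) solve u' = -j, j' = (K/β)u + (2s/(1+s²) - K(1+s²))·j. Define E(s) = u(s)² + (β/K)·j(s)². Then E'(s) = 2·(2s/(1+s²) - K(1+s²))·(β/K)·j(s)², and in particular if K ≥ 1 then E is non-increasing. -/
/-!
Multiplying `u' = -j` by `u` and `j' = c u + a j` by `j / c` makes the coupling terms cancel, so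
the energy `u² + j² / c` changes only through the damping term: its derivative is `2 a j² / c`.
For the resonant coefficient `a(s) = 2s/(1+s²) - K(1+s²)` this is non-positive once `K ≥ 1`,
since `2s ≤ 1 + s²`.
-/

theorem hasDerivAt_energy_of_linear_system {u j : ℝ → ℝ} {c a s : ℝ} (hc : c ≠ 0)
    (hu : HasDerivAt u (-j s) s) (hj : HasDerivAt j (c * u s + a * j s) s) :
    HasDerivAt (fun s => u s ^ 2 + c⁻¹ * j s ^ 2) (2 * a * (c⁻¹ * j s ^ 2)) s := by
  refine ((hu.pow 2).add ((hj.pow 2).const_mul c⁻¹)).congr_deriv ?_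
  field_simp
  ring

theorem two_mul_div_one_add_sq_le_one (s : ℝ) : 2 * s / (1 + s ^ 2) ≤ 1 := by
  rw [div_le_one (by positivity)]
  nlinarith [sq_nonneg (s - 1)]

theorem resonant_coeff_nonpos {K : ℝ} (hK : 1 ≤ K) (s : ℝ) :
    2 * s / (1 + s ^ 2) - K * (1 + s ^ 2) ≤ 0 := by
  have : 1 ≤ K * (1 + s ^ 2) := by nlinarith [sq_nonneg s]
  linarith [two_mul_div_one_add_sq_le_one s]

theorem stmt14 (K β : ℝ) (hK : 0 < K) (hβ : 0 < β)
    (u j : ℝ → ℝ) (hu : Differentiable ℝ u) (hj : Differentiable ℝ j)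
    (hueq : ∀ s, deriv u s = -j s)
    (hjeq : ∀ s, deriv j s = (K / β) * u s + (2 * s / (1 + s ^ 2) - K * (1 + s ^ 2)) * j s) :
    (∀ s, deriv (fun s => u s ^ 2 + (β / K) * j s ^ 2) s
        = 2 * (2 * s / (1 + s ^ 2) - K * (1 + s ^ 2)) * ((β / K) * j s ^ 2))
    ∧ (1 ≤ K → Antitone (fun s => u s ^ 2 + (β / K) * j s ^ 2)) := by
  have hE : ∀ s, deriv (fun s => u s ^ 2 + (β / K) * j s ^ 2) s
      = 2 * (2 * s / (1 + s ^ 2) - K * (1 + s ^ 2)) * ((β / K) * j s ^ 2) := by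
    intro s
    have h := hasDerivAt_energy_of_linear_system (div_ne_zero hK.ne' hβ.ne')
      (hueq s ▸ (hu s).hasDerivAt) (hjeq s ▸ (hj s).hasDerivAt)
    simpa only [inv_div] using h.deriv
  refine ⟨hE, fun hK1 => antitone_of_deriv_nonpos ((hu.pow 2).add ((hj.pow 2).const_mul _)) ?_⟩
  intro s
  rw [hE s]
  exact mul_nonpos_of_nonpos_of_nonneg
    (mul_nonpos_of_nonneg_of_nonpos zero_le_two (resonant_coeff_nonpos hK1 s)) (by positivity)
end

section
/- Let (wₖ)ₖ∈ℤ be a nonnegative sequence satisfying wₖ ≤ δ_{k,k₀} + c·(Wₖ₊₁ + Wₖ₋₁) for all k, where Wₖ = sup over the relevant time of wₖ, 0 < c < 1/4, and the bound closes in the sense that Wₖ ≤ δ_{k,k₀} + c(Wₖ₊₁ + Wₖ₋₁) with (Wₖ) bounded. Then Wₖ ≤ (1/(1-2c))·(2c)^{|k - k₀|} for all k ∈ ℤ. -/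
/-!
With `A = 1 / (1 - 2c)`, the profile `T k = A (2c)^|k - k₀|` is a supersolution of the
recursion: `δ_{k,k₀} + c (T (k+1) + T (k-1)) ≤ T k` whenever `0 ≤ c < 1/2`. The difference
`D = W - T` is bounded above and satisfies `D k ≤ c (D (k+1) + D (k-1))`; iterating this
`n` times gives `D ≤ (2c)^n sup D`, which tends to `0`, so `W ≤ T`.
-/

open Filter Topology

theorem nonpos_of_le_mul_neighbors {c : ℝ} (hc0 : 0 ≤ c) (hc : c < 1 / 2) {D : ℤ → ℝ}
    (hbdd : BddAbove (Set.range D)) (hD : ∀ k, D k ≤ c * (D (k + 1) + D (k - 1))) (k : ℤ) :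
    D k ≤ 0 := by
  obtain ⟨M, hM⟩ := hbdd
  have hiter : ∀ n : ℕ, ∀ k, D k ≤ (2 * c) ^ n * M := by
    intro n
    induction n with
    | zero => simpa using Set.forall_mem_range.1 hM
    | succ n ih =>
      intro k
      calc D k ≤ c * (D (k + 1) + D (k - 1)) := hD k
        _ ≤ c * ((2 * c) ^ n * M + (2 * c) ^ n * M) := by gcongr <;> apply ih
        _ = (2 * c) ^ (n + 1) * M := by ring
  have hlim : Tendsto (fun n : ℕ => (2 * c) ^ n * M) atTop (𝓝 0) := by
    simpa using (tendsto_pow_atTop_nhds_zero_of_lt_one (by linarith) (by linarith)).mul_const M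
  exact ge_of_tendsto' hlim fun n => hiter n k

theorem le_of_le_add_mul_neighbors {c : ℝ} (hc0 : 0 ≤ c) (hc : c < 1 / 2) {f W T : ℤ → ℝ}
    (hbdd : BddAbove (Set.range (W - T)))
    (hW : ∀ k, W k ≤ f k + c * (W (k + 1) + W (k - 1)))
    (hT : ∀ k, f k + c * (T (k + 1) + T (k - 1)) ≤ T k) (k : ℤ) : W k ≤ T k := by
  have hD : ∀ k, (W - T) k ≤ c * ((W - T) (k + 1) + (W - T) (k - 1)) := fun k => by
    simp only [Pi.sub_apply]
    linarith [hW k, hT k]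
  simpa [sub_nonpos] using nonpos_of_le_mul_neighbors hc0 hc hbdd hD k

theorem pow_natAbs_add_one_add_pow_natAbs_sub_one (r : ℝ) {m : ℤ} (hm : m ≠ 0) :
    r ^ (m + 1).natAbs + r ^ (m - 1).natAbs = r ^ (m.natAbs - 1) * (1 + r ^ 2) := by
  obtain ⟨h₁, h₂⟩ | ⟨h₁, h₂⟩ :
      ((m + 1).natAbs = m.natAbs - 1 + 2 ∧ (m - 1).natAbs = m.natAbs - 1) ∨
      ((m + 1).natAbs = m.natAbs - 1 ∧ (m - 1).natAbs = m.natAbs - 1 + 2) := by omega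
  all_goals rw [h₁, h₂]; ring

noncomputable def decayProfile (c : ℝ) (k₀ k : ℤ) : ℝ := 1 / (1 - 2 * c) * (2 * c) ^ (k - k₀).natAbs

theorem decayProfile_nonneg {c : ℝ} (hc0 : 0 ≤ c) (hc : c < 1 / 2) (k₀ k : ℤ) :
    0 ≤ decayProfile c k₀ k := by
  have : 0 < 1 - 2 * c := by linarith
  unfold decayProfile
  positivity

theorem kronecker_add_mul_decayProfile_neighbors_le {c : ℝ} (hc0 : 0 ≤ c) (hc : c < 1 / 2)
    (k₀ k : ℤ) :
    (if k = k₀ then 1 else 0) + c * (decayProfile c k₀ (k + 1) + decayProfile c k₀ (k - 1)) ≤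
      decayProfile c k₀ k := by
  have hpos : 0 < 1 - 2 * c := by linarith
  have hA0 : 0 ≤ 1 / (1 - 2 * c) := by positivity
  have hA : 1 / (1 - 2 * c) * (1 - 2 * c) = 1 := one_div_mul_cancel hpos.ne'
  unfold decayProfile
  rw [add_sub_right_comm k 1 k₀, sub_right_comm k 1 k₀]
  set A := 1 / (1 - 2 * c)
  split_ifs with hk
  · subst hk
    have : A - (1 + c * (A * (2 * c) + A * (2 * c))) = 2 * c := by
      linear_combination (1 + 2 * c) * hA
    simp only [sub_self, zero_add, zero_sub, Int.natAbs_neg, Int.natAbs_one, Int.natAbs_zero,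
      pow_one, pow_zero, mul_one]
    linarith
  · have hm : k - k₀ ≠ 0 := sub_ne_zero.2 hk
    have hd : (k - k₀).natAbs = (k - k₀).natAbs - 1 + 1 := by omega
    rw [← mul_add, pow_natAbs_add_one_add_pow_natAbs_sub_one _ hm, hd, pow_succ]
    have hc3 : c * (1 + (2 * c) ^ 2) ≤ 2 * c := by nlinarith
    have hP : 0 ≤ A * (2 * c) ^ ((k - k₀).natAbs - 1) := by positivity
    calc 0 + c * (A * ((2 * c) ^ ((k - k₀).natAbs - 1) * (1 + (2 * c) ^ 2)))
        = A * (2 * c) ^ ((k - k₀).natAbs - 1) * (c * (1 + (2 * c) ^ 2)) := by ring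
      _ ≤ A * (2 * c) ^ ((k - k₀).natAbs - 1) * (2 * c) := by gcongr
      _ = A * ((2 * c) ^ ((k - k₀).natAbs - 1) * (2 * c)) := by ring

theorem stmt16_general (c : ℝ) (hc0 : 0 < c) (hc : c < 1 / 4) (k₀ : ℤ) (W : ℤ → ℝ)
    (hbdd : ∃ M, ∀ k, W k ≤ M)
    (hrec : ∀ k, W k ≤ (if k = k₀ then 1 else 0) + c * (W (k + 1) + W (k - 1))) :
    ∀ k, W k ≤ (1 / (1 - 2 * c)) * (2 * c) ^ (k - k₀).natAbs := by
  have hc' : c < 1 / 2 := by linarith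
  obtain ⟨M, hM⟩ := hbdd
  have hdiff : BddAbove (Set.range (W - decayProfile c k₀)) :=
    ⟨M, Set.forall_mem_range.2 fun k => by
      simp only [Pi.sub_apply]
      linarith [hM k, decayProfile_nonneg hc0.le hc' k₀ k]⟩
  exact le_of_le_add_mul_neighbors hc0.le hc' hdiff hrec
    (kronecker_add_mul_decayProfile_neighbors_le hc0.le hc' k₀)

theorem stmt16 (c : ℝ) (hc0 : 0 < c) (hc : c < 1 / 4) (k₀ : ℤ) (W : ℤ → ℝ)
    (hbdd : ∃ M, ∀ k, W k ≤ M) (hnonneg : ∀ k, 0 ≤ W k)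
    (hrec : ∀ k, W k ≤ (if k = k₀ then 1 else 0) + c * (W (k + 1) + W (k - 1))) :
    ∀ k, W k ≤ (1 / (1 - 2 * c)) * (2 * c) ^ (k - k₀).natAbs :=
  stmt16_general c hc0 hc k₀ W hbdd hrec
end

section
/- Let κ > 0, k a nonzero integer, and define M(k,t) = 1 if t ≤ ξ/k or κk² ≥ 1; M(k,t) = 1/(1+(ξ/k - t)²) if 0 ≤ t - ξ/k ≤ (2/(κk²))^{1/3} and κk² ≤ 1; and M(k,t) = 1/(1+(2/(κk²))^{1/3}) if t - ξ/k ≥ (2/(κk²))^{1/3} and κk² ≤ 1. Then with b(k,t) = 2(t-ξ/k)/(1+(ξ/k-t)²) - κk²(1+(ξ/k-t)²), one has b(k,t) + (∂ₜM/M)(k,t) ≤ 0 for all t where M is differentiable. -/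
/-!
Write `a = κk²`, `c = ξ/k` and `s = t - c`. Where `M ≡ 1` the growth term is nonpositive by itself:
for `s ≤ 0` its first term is `≤ 0`, and for `a ≥ 1` it is `≤ 1 ≤ a(1 + s²)`. On `0 < s < (2/a)^{1/3}`
the weight is `1/(1 + s²)`, whose logarithmic derivative `-2s/(1 + s²)` cancels the first term of `b`
exactly, leaving `-a(1 + s²)`. Beyond the cutoff `M` is constant and `a s³ > 2` gives
`2s/(1 + s²) < 2/s < a s² < a(1 + s²)`. At the cutoff itself `M` jumps (the cutoff exceeds `1` when
`a < 1`), so it is not differentiable there.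
-/

open Filter Topology

namespace RoughEnergy

noncomputable section

def cutoff (a : ℝ) : ℝ := (2 / a) ^ ((1 : ℝ) / 3)

def roughWeight (a c t : ℝ) : ℝ :=
  if t ≤ c ∨ 1 ≤ a then 1
  else if t - c ≤ cutoff a then 1 / (1 + (c - t) ^ 2)
  else 1 / (1 + cutoff a)

def growth (a c t : ℝ) : ℝ :=
  2 * (t - c) / (1 + (c - t) ^ 2) - a * (1 + (c - t) ^ 2)

end

variable {a c t : ℝ}

lemma cutoff_pos (ha : 0 < a) : 0 < cutoff a :=
  Real.rpow_pos_of_pos (div_pos two_pos ha) _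

lemma cutoff_pow_three (ha : 0 < a) : cutoff a ^ 3 = 2 / a := by
  rw [cutoff, ← Real.rpow_natCast, ← Real.rpow_mul (by positivity)]
  norm_num

lemma one_lt_cutoff (ha : 0 < a) (ha1 : a < 1) : 1 < cutoff a := by
  rw [cutoff, Real.one_lt_rpow_iff_of_pos (by positivity)]
  exact Or.inl ⟨by rw [lt_div_iff₀ ha]; linarith, by norm_num⟩

lemma roughWeight_le_one (ha : 0 < a) (c t : ℝ) : roughWeight a c t ≤ 1 := by
  unfold roughWeight
  split_ifs
  · rfl
  · rw [div_le_one (by positivity)]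
    nlinarith [sq_nonneg (c - t)]
  · rw [div_le_one (by linarith [cutoff_pos ha])]
    linarith [cutoff_pos ha]

lemma roughWeight_of_lt_of_le (ha1 : a < 1) (hct : c < t) (ht : t - c ≤ cutoff a) :
    roughWeight a c t = 1 / (1 + (c - t) ^ 2) := by
  rw [roughWeight, if_neg (not_or.2 ⟨not_le.2 hct, not_le.2 ha1⟩), if_pos ht]

lemma roughWeight_of_cutoff_lt (ha : 0 < a) (ha1 : a < 1) (ht : c + cutoff a < t) :
    roughWeight a c t = 1 / (1 + cutoff a) := by
  have hct : c < t := by linarith [cutoff_pos ha]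
  rw [roughWeight, if_neg (not_or.2 ⟨not_le.2 hct, not_le.2 ha1⟩), if_neg (by linarith)]

lemma not_continuousAt_roughWeight_cutoff (ha : 0 < a) (ha1 : a < 1) :
    ¬ ContinuousAt (roughWeight a c) (c + cutoff a) := by
  intro hcont
  have hright : Tendsto (roughWeight a c) (𝓝[>] (c + cutoff a)) (𝓝 (1 / (1 + cutoff a))) :=
    tendsto_const_nhds.congr' <| eventually_nhdsWithin_of_forall fun x hx =>
      (roughWeight_of_cutoff_lt ha ha1 hx).symm
  have hjump := tendsto_nhds_unique hcont.continuousWithinAt hright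
  rw [roughWeight_of_lt_of_le ha1 (by linarith [cutoff_pos ha]) (by linarith)] at hjump
  have h1 := one_lt_cutoff ha ha1
  rw [div_eq_div_iff (by positivity) (by positivity)] at hjump
  nlinarith

lemma logDeriv_inv_one_add_sq (c t : ℝ) :
    logDeriv (fun x => 1 / (1 + (c - x) ^ 2)) t = 2 * (c - t) / (1 + (c - t) ^ 2) := by
  have hD : 1 + (c - t) ^ 2 ≠ 0 := by positivity
  have hsq : HasDerivAt (fun x : ℝ => 1 + (c - x) ^ 2) (-(2 * (c - t))) t :=
    ((((hasDerivAt_id' t).const_sub c).fun_pow 2).const_add 1).congr_deriv (by norm_num)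
  simp only [one_div]
  rw [logDeriv_apply, (hsq.fun_inv hD).deriv]
  field_simp

lemma growth_nonpos_of_le (ha : 0 ≤ a) (ht : t ≤ c) : growth a c t ≤ 0 := by
  have hfirst : 2 * (t - c) / (1 + (c - t) ^ 2) ≤ 0 :=
    div_nonpos_of_nonpos_of_nonneg (by linarith) (by positivity)
  have hsecond : 0 ≤ a * (1 + (c - t) ^ 2) := by positivity
  rw [growth]
  linarith

lemma growth_nonpos_of_one_le (ha : 1 ≤ a) : growth a c t ≤ 0 := by
  have hfirst : 2 * (t - c) / (1 + (c - t) ^ 2) ≤ 1 := by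
    rw [div_le_one (by positivity)]
    nlinarith [sq_nonneg (t - c - 1)]
  have hsecond : 1 ≤ a * (1 + (c - t) ^ 2) := by nlinarith [sq_nonneg (c - t)]
  rw [growth]
  linarith

lemma growth_nonpos_of_two_lt_mul_pow_three (hs : 0 < t - c) (h : 2 < a * (t - c) ^ 3) :
    growth a c t ≤ 0 := by
  have ha : 0 < a := (pos_iff_pos_of_mul_pos (by linarith : 0 < a * (t - c) ^ 3)).2 (by positivity)
  have hD : 0 < 1 + (c - t) ^ 2 := by positivity
  rw [growth, sub_nonpos, div_le_iff₀ hD]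
  calc 2 * (t - c) ≤ (t - c) * (a * (t - c) ^ 3) := by nlinarith
    _ = a * ((c - t) ^ 2) ^ 2 := by ring
    _ ≤ a * (1 + (c - t) ^ 2) * (1 + (c - t) ^ 2) := by nlinarith [sq_nonneg (c - t)]

lemma growth_add_logDeriv_inv_one_add_sq (a c t : ℝ) :
    growth a c t + logDeriv (fun x => 1 / (1 + (c - x) ^ 2)) t = -(a * (1 + (c - t) ^ 2)) := by
  rw [growth, logDeriv_inv_one_add_sq]
  ring

theorem growth_add_logDeriv_roughWeight_nonpos (ha : 0 < a)
    (hd : DifferentiableAt ℝ (roughWeight a c) t) :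
    growth a c t + logDeriv (roughWeight a c) t ≤ 0 := by
  by_cases hflat : t ≤ c ∨ 1 ≤ a
  · have hmax : IsLocalMax (roughWeight a c) t := Eventually.of_forall fun x =>
      (roughWeight_le_one ha c x).trans_eq (if_pos hflat).symm
    rw [logDeriv_apply, hmax.deriv_eq_zero, zero_div, add_zero]
    exact hflat.elim (growth_nonpos_of_le ha.le) growth_nonpos_of_one_le
  obtain ⟨hct, ha1⟩ : c < t ∧ a < 1 := by simpa only [not_or, not_le] using hflat
  rcases lt_trichotomy (t - c) (cutoff a) with hbump | hjump | hconst
  · have hev : roughWeight a c =ᶠ[𝓝 t] fun x => 1 / (1 + (c - x) ^ 2) := by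
      filter_upwards [eventually_gt_nhds hct, eventually_lt_nhds (by linarith : t < c + cutoff a)]
        with x hcx hx
      exact roughWeight_of_lt_of_le ha1 hcx (by linarith)
    rw [(logDeriv_congr_nhds hev).eq_of_nhds, growth_add_logDeriv_inv_one_add_sq]
    have : 0 < a * (1 + (c - t) ^ 2) := by positivity
    linarith
  · obtain rfl : t = c + cutoff a := by linarith
    exact absurd hd.continuousAt (not_continuousAt_roughWeight_cutoff ha ha1)
  · have hev : roughWeight a c =ᶠ[𝓝 t] fun _ => 1 / (1 + cutoff a) :=
      (eventually_gt_nhds (by linarith : c + cutoff a < t)).mono fun x hx =>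
        roughWeight_of_cutoff_lt ha ha1 hx
    rw [(logDeriv_congr_nhds hev).eq_of_nhds, logDeriv_const, Pi.zero_apply, add_zero]
    refine growth_nonpos_of_two_lt_mul_pow_three (by linarith) ?_
    have hcube : cutoff a ^ 3 < (t - c) ^ 3 := by
      gcongr
      exact (cutoff_pos ha).le
    rw [cutoff_pow_three ha, div_lt_iff₀ ha] at hcube
    linarith

end RoughEnergy

theorem stmt19 (κ ξ : ℝ) (k : ℤ) (hκ : 0 < κ) (hk : k ≠ 0) :
    let M : ℝ → ℝ := fun t =>
      if t ≤ ξ / (k : ℝ) ∨ 1 ≤ κ * (k : ℝ) ^ 2 then 1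
      else if t - ξ / (k : ℝ) ≤ (2 / (κ * (k : ℝ) ^ 2)) ^ ((1 : ℝ) / 3) then
        1 / (1 + (ξ / (k : ℝ) - t) ^ 2)
      else 1 / (1 + (2 / (κ * (k : ℝ) ^ 2)) ^ ((1 : ℝ) / 3))
    let b : ℝ → ℝ := fun t =>
      2 * (t - ξ / (k : ℝ)) / (1 + (ξ / (k : ℝ) - t) ^ 2)
        - κ * (k : ℝ) ^ 2 * (1 + (ξ / (k : ℝ) - t) ^ 2)
    ∀ t, DifferentiableAt ℝ M t → b t + deriv M t / M t ≤ 0 := by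
  intro M b t hd
  have hk' : (k : ℝ) ≠ 0 := Int.cast_ne_zero.mpr hk
  -- `M`, `b` and `deriv M t / M t` are `roughWeight`, `growth` and `logDeriv` at `a = κk²`, `c = ξ/k`.
  exact RoughEnergy.growth_add_logDeriv_roughWeight_nonpos (by positivity) hd
end
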